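/- arXiv:2312.10911 — 3 statements merged into one kernel-verified Lean document; each statement's English description precedes it below -/
import Mathlib

section
/- For any classifier κ and instance (v, c) with κ(v) = c, a set X ⊆ F is a weak AXp if and only if X intersects (hits) every weak CXp. Dually, Y ⊆ F is a weak CXp if and only if Y hits every weak AXp. -/
/-- Weak AXp: fixing the features in X to their values in v forces prediction c. -/
def WeakAXp {m : ℕ} {D : Fin m → Type*} {K : Type*}
    (κ : (∀ i, D i) → K) (v : ∀ i, D i) (c : K) (X : Finset (Fin m)) : Prop :=
  ∀ x : ∀ i, D i, (∀ i ∈ X, x i = v i) → κ x = c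

/-- Weak CXp: freeing only the features in Y permits a prediction different from c. -/
def WeakCXp {m : ℕ} {D : Fin m → Type*} {K : Type*}
    (κ : (∀ i, D i) → K) (v : ∀ i, D i) (c : K) (Y : Finset (Fin m)) : Prop :=
  ∃ x : ∀ i, D i, (∀ i ∉ Y, x i = v i) ∧ κ x ≠ c

/-- Hitting-set duality for weak explanations: X is a weak AXp iff it hits every
weak CXp, and Y is a weak CXp iff it hits every weak AXp. -/
theorem weak_xp_hitting_duality {m : ℕ} {D : Fin m → Type*} {K : Type*}
    (κ : (∀ i, D i) → K) (v : ∀ i, D i) (c : K) (hv : κ v = c) :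
    (∀ X : Finset (Fin m), WeakAXp κ v c X ↔
      ∀ Y : Finset (Fin m), WeakCXp κ v c Y → (X ∩ Y).Nonempty) ∧
    (∀ Y : Finset (Fin m), WeakCXp κ v c Y ↔
      ∀ X : Finset (Fin m), WeakAXp κ v c X → (Y ∩ X).Nonempty) := by
  constructor
  · intro X
    constructor
    · rintro hX Y ⟨x, hx, hxc⟩
      by_contra h
      rw [Finset.not_nonempty_iff_eq_empty, ← Finset.disjoint_iff_inter_eq_empty] at h
      exact hxc (hX x fun i hi => hx i (Finset.disjoint_left.mp h hi))
    · intro h x hx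
      by_contra hxc
      have := h (Finset.univ \ X) ⟨x, fun i hi => hx i (by simpa using hi), hxc⟩
      obtain ⟨i, hi⟩ := this
      simp at hi
  · intro Y
    constructor
    · rintro ⟨x, hx, hxc⟩ X hX
      by_contra h
      rw [Finset.not_nonempty_iff_eq_empty, ← Finset.disjoint_iff_inter_eq_empty] at h
      exact hxc (hX x fun i hi => hx i (Finset.disjoint_right.mp h hi))
    · intro h
      by_cases hA : WeakAXp κ v c (Finset.univ \ Y)
      · obtain ⟨i, hi⟩ := h _ hA
        simp at hi
      · simp only [WeakAXp, not_forall] at hA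
        obtain ⟨x, hx, hxc⟩ := hA
        exact ⟨x, fun i hi => hx i (by simpa using hi), hxc⟩
end

section
/- Minimal hitting set duality for explanations: the subset-minimal weak AXps (AXps) are exactly the minimal hitting sets of the collection of subset-minimal weak CXps (CXps), and vice versa. -/
/-- AXp: a subset-minimal weak AXp. -/
def AXp {m : ℕ} {D : Fin m → Type*} {K : Type*}
    (κ : (∀ i, D i) → K) (v : ∀ i, D i) (c : K) (X : Finset (Fin m)) : Prop :=
  WeakAXp κ v c X ∧ ∀ X' ⊂ X, ¬ WeakAXp κ v c X'

/-- CXp: a subset-minimal weak CXp. -/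
def CXp {m : ℕ} {D : Fin m → Type*} {K : Type*}
    (κ : (∀ i, D i) → K) (v : ∀ i, D i) (c : K) (Y : Finset (Fin m)) : Prop :=
  WeakCXp κ v c Y ∧ ∀ Y' ⊂ Y, ¬ WeakCXp κ v c Y'

/-- `S` is a minimal hitting set of the family of sets satisfying `P`. -/
def MinimalHittingSet {m : ℕ} (P : Finset (Fin m) → Prop) (S : Finset (Fin m)) : Prop :=
  (∀ T, P T → (S ∩ T).Nonempty) ∧ ∀ S' ⊂ S, ¬ (∀ T, P T → (S' ∩ T).Nonempty)

open Classical in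
lemma exists_min_subset {m : ℕ} (P : Finset (Fin m) → Prop) :
    ∀ S : Finset (Fin m), P S → ∃ T ⊆ S, P T ∧ ∀ T' ⊂ T, ¬ P T' := by
  intro S
  induction S using Finset.strongInductionOn with
  | _ S ih =>
    intro hS
    by_cases h : ∃ S' ⊂ S, P S'
    · obtain ⟨S', hsub, hP⟩ := h
      obtain ⟨T, hT, hPT, hmin⟩ := ih S' hsub hP
      exact ⟨T, hT.trans hsub.subset, hPT, hmin⟩
    · push_neg at h
      exact ⟨S, le_refl _, hS, fun T' hT' => h T' hT'⟩

lemma weakAXp_iff_hits {m : ℕ} {D : Fin m → Type*} {K : Type*}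
    (κ : (∀ i, D i) → K) (v : ∀ i, D i) (c : K) (X : Finset (Fin m)) :
    WeakAXp κ v c X ↔ ∀ T, CXp κ v c T → (X ∩ T).Nonempty := by
  constructor
  · intro h T ⟨⟨x, hx, hne⟩, _⟩
    by_contra hemp
    apply hne
    apply h
    intro i hi
    apply hx
    intro hiT
    exact hemp ⟨i, Finset.mem_inter.2 ⟨hi, hiT⟩⟩
  · intro h
    by_contra hA
    classical
    unfold WeakAXp at hA
    push_neg at hA
    obtain ⟨x, hx, hne⟩ := hA
    set Y : Finset (Fin m) := Finset.univ.filter (fun i => x i ≠ v i) with hY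
    have hYw : WeakCXp κ v c Y := by
      refine ⟨x, fun i hi => ?_, hne⟩
      by_contra hxi
      exact hi (Finset.mem_filter.2 ⟨Finset.mem_univ _, hxi⟩)
    obtain ⟨T, hTY, hTw, hTmin⟩ := exists_min_subset (WeakCXp κ v c) Y hYw
    obtain ⟨i, hiXT⟩ := h T ⟨hTw, hTmin⟩
    rw [Finset.mem_inter] at hiXT
    have := hTY hiXT.2
    rw [Finset.mem_filter] at this
    exact this.2 (hx i hiXT.1)

lemma weakCXp_iff_hits {m : ℕ} {D : Fin m → Type*} {K : Type*}
    (κ : (∀ i, D i) → K) (v : ∀ i, D i) (c : K) (Y : Finset (Fin m)) :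
    WeakCXp κ v c Y ↔ ∀ T, AXp κ v c T → (Y ∩ T).Nonempty := by
  constructor
  · intro ⟨x, hx, hne⟩ T ⟨hTw, _⟩
    by_contra hemp
    apply hne
    apply hTw
    intro i hi
    apply hx
    intro hiY
    exact hemp ⟨i, Finset.mem_inter.2 ⟨hiY, hi⟩⟩
  · intro h
    by_contra hC
    unfold WeakCXp at hC
    push_neg at hC
    have hAw : WeakAXp κ v c Yᶜ := by
      intro x hx
      exact hC x (fun i hi => hx i (Finset.mem_compl.2 hi))
    obtain ⟨T, hTY, hTw, hTmin⟩ := exists_min_subset (WeakAXp κ v c) Yᶜ hAw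
    obtain ⟨i, hi⟩ := h T ⟨hTw, hTmin⟩
    rw [Finset.mem_inter] at hi
    exact Finset.mem_compl.1 (hTY hi.2) hi.1


theorem mhs_duality_axp_cxp' {m : ℕ} {D : Fin m → Type*} {K : Type*}
    (κ : (∀ i, D i) → K) (v : ∀ i, D i) (c : K) (hv : κ v = c) :
    (∀ X : Finset (Fin m), AXp κ v c X ↔ MinimalHittingSet (CXp κ v c) X) ∧
    (∀ Y : Finset (Fin m), CXp κ v c Y ↔ MinimalHittingSet (AXp κ v c) Y) := by
  constructor
  · intro X
    unfold AXp MinimalHittingSet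
    constructor
    · intro ⟨h1, h2⟩
      exact ⟨(weakAXp_iff_hits κ v c X).1 h1,
        fun S' hS' hS'h => h2 S' hS' ((weakAXp_iff_hits κ v c S').2 hS'h)⟩
    · intro ⟨h1, h2⟩
      exact ⟨(weakAXp_iff_hits κ v c X).2 h1,
        fun S' hS' hS'h => h2 S' hS' ((weakAXp_iff_hits κ v c S').1 hS'h)⟩
  · intro Y
    unfold CXp MinimalHittingSet
    constructor
    · intro ⟨h1, h2⟩
      exact ⟨(weakCXp_iff_hits κ v c Y).1 h1,
        fun S' hS' hS'h => h2 S' hS' ((weakCXp_iff_hits κ v c S').2 hS'h)⟩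
    · intro ⟨h1, h2⟩
      exact ⟨(weakCXp_iff_hits κ v c Y).2 h1,
        fun S' hS' hS'h => h2 S' hS' ((weakCXp_iff_hits κ v c S').1 hS'h)⟩

/-- Minimal hitting set duality between AXps and CXps: the AXps are exactly the
minimal hitting sets of the CXps, and vice-versa. -/
theorem mhs_duality_axp_cxp {m : ℕ} {D : Fin m → Type*} {K : Type*}
    (κ : (∀ i, D i) → K) (v : ∀ i, D i) (c : K) (hv : κ v = c) :
    (∀ X : Finset (Fin m), AXp κ v c X ↔ MinimalHittingSet (CXp κ v c) X) ∧
    (∀ Y : Finset (Fin m), CXp κ v c Y ↔ MinimalHittingSet (AXp κ v c) Y) := by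
  exact mhs_duality_axp_cxp' κ v c hv
end

section
/- For a non-trivial classifier κ : ℝ^m → K (with l_p distance, p ≥ 1), there exists a point t ∈ ℝ^m such that for every ε > 0 there exists a nonempty ε-CXp for the instance (t, κ(t)); consequently, for every ε > 0 there also exists a nonempty ε-AXp for that instance. -/
/-- The Minkowski (l_p) distance on ℝ^m. -/
noncomputable def lpDist (m : ℕ) (p : ℝ) (x y : Fin m → ℝ) : ℝ :=
  (∑ i, |x i - y i| ^ p) ^ (1 / p)

/-- Weak distance-restricted CXp. -/
def WECXp (m : ℕ) {K : Type*} (κ : (Fin m → ℝ) → K) (p : ℝ) (t : Fin m → ℝ)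
    (ε : ℝ) (Y : Finset (Fin m)) : Prop :=
  ∃ x : Fin m → ℝ, (∀ i ∉ Y, x i = t i) ∧ lpDist m p x t ≤ ε ∧ κ x ≠ κ t

/-- Weak distance-restricted AXp. -/
def WEAXp (m : ℕ) {K : Type*} (κ : (Fin m → ℝ) → K) (p : ℝ) (t : Fin m → ℝ)
    (ε : ℝ) (X : Finset (Fin m)) : Prop :=
  ∀ x : Fin m → ℝ, ((∀ i ∈ X, x i = t i) ∧ lpDist m p x t ≤ ε) → κ x = κ t

private lemma exists_min_pred {m : ℕ} (P : Finset (Fin m) → Prop)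
    (huniv : P Finset.univ) (hempty : ¬ P ∅) :
    ∃ Y : Finset (Fin m), Y.Nonempty ∧ P Y ∧ ∀ Y' ⊂ Y, ¬ P Y' := by
  classical
  obtain ⟨Y, hYmem, hYmin⟩ := Finset.exists_min_image
    ((Finset.univ : Finset (Finset (Fin m))).filter P) Finset.card
    ⟨Finset.univ, by simp [huniv]⟩
  simp only [Finset.mem_filter, Finset.mem_univ, true_and] at hYmem
  refine ⟨Y, ?_, hYmem, ?_⟩
  · rcases Finset.eq_empty_or_nonempty Y with h | h
    · exact absurd (h ▸ hYmem) hempty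
    · exact h
  · intro Y' hY' hP
    have := hYmin Y' (by simp [hP])
    exact absurd this (not_le.mpr (Finset.card_lt_card hY'))

private lemma lpDist_seg {m : ℕ} {p : ℝ} (hp : 1 ≤ p) (a b : Fin m → ℝ) (s s' : ℝ) :
    lpDist m p (fun i => a i + s * (b i - a i)) (fun i => a i + s' * (b i - a i))
      = |s - s'| * lpDist m p b a := by
  have hp0 : p ≠ 0 := by positivity
  unfold lpDist
  have h1 : ∀ i : Fin m, |(a i + s * (b i - a i)) - (a i + s' * (b i - a i))| ^ p
      = |s - s'| ^ p * |b i - a i| ^ p := by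
    intro i
    rw [show (a i + s * (b i - a i)) - (a i + s' * (b i - a i)) = (s - s') * (b i - a i) by ring,
      abs_mul, Real.mul_rpow (abs_nonneg _) (abs_nonneg _)]
  simp only [h1, ← Finset.mul_sum]
  rw [Real.mul_rpow (by positivity) (Finset.sum_nonneg fun i _ => Real.rpow_nonneg (abs_nonneg _) _),
    ← Real.rpow_mul (abs_nonneg _), mul_one_div_cancel hp0, Real.rpow_one]

/-- For a non-trivial classifier on real-valued features there is an instance
admitting, for every ε > 0, nonempty ε-CXps and nonempty ε-AXps. -/
theorem exists_instance_with_nonempty_dr_explanations {m : ℕ} {K : Type*}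
    (κ : (Fin m → ℝ) → K) (hκ : ∃ a b, κ a ≠ κ b) (p : ℝ) (hp : 1 ≤ p) :
    ∃ t : Fin m → ℝ,
      (∀ ε > (0 : ℝ), ∃ Y : Finset (Fin m), Y.Nonempty ∧
        WECXp m κ p t ε Y ∧ ∀ Y' ⊂ Y, ¬ WECXp m κ p t ε Y') ∧
      (∀ ε > (0 : ℝ), ∃ X : Finset (Fin m), X.Nonempty ∧
        WEAXp m κ p t ε X ∧ ∀ X' ⊂ X, ¬ WEAXp m κ p t ε X') := by
  classical
  obtain ⟨a, b, hab⟩ := hκ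
  set f : ℝ → (Fin m → ℝ) := fun s i => a i + s * (b i - a i) with hf
  have hf0 : f 0 = a := by funext i; simp [hf]
  have hf1 : f 1 = b := by funext i; simp [hf]
  set S : Set ℝ := {s | s ∈ Set.Icc (0:ℝ) 1 ∧ κ (f s) = κ a} with hS
  have h0S : (0:ℝ) ∈ S := ⟨⟨le_refl 0, zero_le_one⟩, by rw [hf0]⟩
  have hbdd : BddAbove S := ⟨1, fun s hs => hs.1.2⟩
  set σ := sSup S with hσ
  have hσ0 : 0 ≤ σ := le_csSup hbdd h0S
  have hσ1 : σ ≤ 1 := csSup_le ⟨0, h0S⟩ (fun s hs => hs.1.2)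
  set t := f σ with ht
  set C := lpDist m p b a with hC
  have hC0 : 0 ≤ C :=
    Real.rpow_nonneg (Finset.sum_nonneg fun i _ => Real.rpow_nonneg (abs_nonneg _) _) _
  have hdist : ∀ s : ℝ, lpDist m p (f s) t = |s - σ| * C := fun s => lpDist_seg hp a b s σ
  have key : ∀ ε > (0:ℝ), ∃ x, lpDist m p x t ≤ ε ∧ κ x ≠ κ t := by
    intro ε hε
    set δ := ε / (C + 1) with hδ
    have hδ0 : 0 < δ := div_pos hε (by linarith)
    have hδC : δ * C ≤ ε := by
      rw [hδ, div_mul_eq_mul_div, div_le_iff₀ (by linarith)]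
      nlinarith
    by_cases hc : κ t = κ a
    · have hσlt : σ < 1 := by
        rcases lt_or_eq_of_le hσ1 with h | h
        · exact h
        · exact absurd (hc.symm.trans (by rw [ht, h, hf1])) hab
      set d := min δ ((1 - σ) / 2) with hd
      have hd0 : 0 < d := lt_min hδ0 (by linarith)
      have hdδ : d ≤ δ := min_le_left _ _
      have hs1 : σ + d < 1 := by
        have := min_le_right δ ((1 - σ) / 2)
        linarith
      refine ⟨f (σ + d), ?_, ?_⟩
      · rw [hdist]
        have : |σ + d - σ| = d := by rw [show σ + d - σ = d by ring, abs_of_pos hd0]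
        rw [this]
        calc d * C ≤ δ * C := by nlinarith
          _ ≤ ε := hδC
      · rw [hc]
        intro hcon
        have hmem : σ + d ∈ S := ⟨⟨by linarith, le_of_lt hs1⟩, hcon⟩
        have := le_csSup hbdd hmem
        linarith
    · obtain ⟨s, hsS, hs⟩ := exists_lt_of_lt_csSup ⟨0, h0S⟩ (show σ - δ < σ by linarith)
      have hsσ : s ≤ σ := le_csSup hbdd hsS
      refine ⟨f s, ?_, ?_⟩
      · rw [hdist]
        have : |s - σ| ≤ δ := by rw [abs_le]; constructor <;> linarith
        calc |s - σ| * C ≤ δ * C := by nlinarith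
          _ ≤ ε := hδC
      · rw [hsS.2]
        exact fun h => hc h.symm
  refine ⟨t, ?_, ?_⟩
  · intro ε hε
    obtain ⟨x, hxd, hxne⟩ := key ε hε
    apply exists_min_pred
    · exact ⟨x, fun i hi => absurd (Finset.mem_univ i) hi, hxd, hxne⟩
    · rintro ⟨y, hy, -, hyne⟩
      exact hyne (by rw [funext fun i => hy i (Finset.notMem_empty i)])
  · intro ε hε
    obtain ⟨x, hxd, hxne⟩ := key ε hε
    apply exists_min_pred
    · rintro y ⟨hy, -⟩
      rw [funext fun i => hy i (Finset.mem_univ i)]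
    · intro h
      exact hxne (h x ⟨fun i hi => absurd hi (Finset.notMem_empty i), hxd⟩)
end
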